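/- Let Δ be a finite set with |Δ| ≥ 2, let m ≥ 2, and let G be a primitive rank 3 permutation group on Δ^m with G ≤ Sym(Δ) ↑ Sym(m) (so G preserves the nontrivial product decomposition Ω = Δ^m). Then m = 2 and G^(2) = Sym(Δ) ↑ Sym(2). -/

import Mathlib

/-- The rank of a permutation group `G ≤ Sym(Ω)`: the number of orbits of `G`
on `Ω × Ω` under the componentwise action (the number of 2-orbits). -/
noncomputable def permRank {Ω : Type*} (G : Subgroup (Equiv.Perm Ω)) : ℕ :=
  Nat.card (MulAction.orbitRel.Quotient G (Ω × Ω))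

/-- The 2-closure of a permutation group `G ≤ Sym(Ω)`: the subgroup of all
permutations mapping every 2-orbit of `G` onto itself. -/
def twoClosure {Ω : Type*} [Finite Ω] (G : Subgroup (Equiv.Perm Ω)) :
    Subgroup (Equiv.Perm Ω) where
  carrier := {f | ∀ p : Ω × Ω, (f p.1, f p.2) ∈ MulAction.orbit G p}
  one_mem' := fun p => MulAction.mem_orbit_self p
  mul_mem' := by
    intro f g hf hg p
    have h1 := hf (g p.1, g p.2)
    have h2 := hg p
    have : MulAction.orbit G ((g p.1, g p.2) : Ω × Ω) = MulAction.orbit G p :=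
      MulAction.orbit_eq_iff.2 h2
    rw [this] at h1
    exact h1
  inv_mem' := by
    intro f hf p
    classical
    have : Finite (MulAction.orbit G p) := Subtype.finite
    set s : MulAction.orbit G p → MulAction.orbit G p := fun x =>
      ⟨(f x.1.1, f x.1.2), by
        have h1 := hf x.1
        have : MulAction.orbit G (x.1 : Ω × Ω) = MulAction.orbit G p :=
          MulAction.orbit_eq_iff.2 x.2
        rw [this] at h1
        exact h1⟩ with hs
    have hinj : Function.Injective s := by
      intro a b hab
      have h1 : (f a.1.1, f a.1.2) = ((f b.1.1 : Ω), f b.1.2) := congrArg Subtype.val hab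
      have h2 : a.1.1 = b.1.1 := f.injective (congrArg Prod.fst h1)
      have h3 : a.1.2 = b.1.2 := f.injective (congrArg Prod.snd h1)
      exact Subtype.ext (Prod.ext h2 h3)
    have hsurj : Function.Surjective s := Finite.surjective_of_injective hinj
    obtain ⟨x, hx⟩ := hsurj ⟨p, MulAction.mem_orbit_self p⟩
    have h1 : ((f x.1.1 : Ω), f x.1.2) = p := congrArg Subtype.val hx
    have e1 : f⁻¹ p.1 = x.1.1 := by
      have h := congrArg Prod.fst h1
      rw [Equiv.Perm.inv_def]
      simpa using (congrArg f.symm h).symm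
    have e2 : f⁻¹ p.2 = x.1.2 := by
      have h := congrArg Prod.snd h1
      rw [Equiv.Perm.inv_def]
      simpa using (congrArg f.symm h).symm
    rw [e1, e2]
    exact x.2

/-- A permutation group `G ≤ Sym(Ω)` is primitive if it is transitive and
every block of `G` is trivial (a subsingleton or the whole domain), i.e. `G`
preserves no partition of `Ω` other than the partition into singletons and the
partition with a single part. -/
def IsPrimitivePerm {Ω : Type*} (G : Subgroup (Equiv.Perm Ω)) : Prop :=
  MulAction.IsPretransitive G Ω ∧
    ∀ B : Set Ω, MulAction.IsBlock G B → B.Subsingleton ∨ B = Set.univ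

/-- The wreath product `G ↑ Sym(m)` in product action, as a subgroup of
`Sym(Δ^m)`: all permutations of the form `v ↦ fun i => g i (v (σ⁻¹ i))` with
`σ ∈ Sym(m)` and `g i ∈ G` for each `i`. -/
def productWreath {Δ : Type*} (G : Subgroup (Equiv.Perm Δ)) (m : ℕ) :
    Subgroup (Equiv.Perm (Fin m → Δ)) where
  carrier := {f | ∃ (σ : Equiv.Perm (Fin m)) (g : Fin m → Equiv.Perm Δ),
    (∀ i, g i ∈ G) ∧ ∀ (v : Fin m → Δ) (i : Fin m), f v i = g i (v (σ⁻¹ i))}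
  one_mem' := ⟨1, fun _ => 1, fun _ => G.one_mem, fun _ _ => rfl⟩
  mul_mem' := by
    rintro f f' ⟨σ, g, hgG, hf⟩ ⟨σ', g', hgG', hf'⟩
    refine ⟨σ * σ', fun i => g i * g' (σ⁻¹ i), fun i => G.mul_mem (hgG i) (hgG' (σ⁻¹ i)),
      fun v i => ?_⟩
    have : (f * f') v = f (f' v) := rfl
    rw [this, hf (f' v) i, hf' v (σ⁻¹ i)]
    rfl
  inv_mem' := by
    rintro f ⟨σ, g, hgG, hf⟩
    refine ⟨σ⁻¹, fun i => (g (σ i))⁻¹, fun i => G.inv_mem (hgG (σ i)), fun v i => ?_⟩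
    have h2 : f⁻¹ v = fun j => (g (σ j))⁻¹ (v (σ j)) := by
      apply f.injective
      rw [Equiv.Perm.inv_def, Equiv.apply_symm_apply]
      funext j
      rw [hf]
      simp
    rw [h2]
    simp

/-! Elements of `Sym(Δ) ↑ Sym(m)` are isometries of the Hamming metric on `Δ^m`, and every
distance `0, …, m` occurs, so a subgroup of the wreath product has at least `m + 1` 2-orbits.
Rank 3 thus forces `m = 2`, and then the 2-orbits are exactly the level sets of the Hamming
distance, so `G^(2)` is the isometry group of the rook's graph on `Δ²`. At every vertex an
isometry either keeps or swaps the directions (row / column) of all incident edges; since the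
graph is connected, it does so globally, and an isometry respecting the coordinates up to a
permutation of them lies in the wreath product. -/

open Equiv Function MulAction

theorem hammingDist_comp_perm {ι Δ : Type*} [Fintype ι] [DecidableEq Δ] (σ : Perm ι)
    (x y : ι → Δ) : hammingDist (x ∘ σ) (y ∘ σ) = hammingDist x y := by
  unfold hammingDist
  exact Finset.card_equiv σ (by simp)

section ProductAction

variable {Δ : Type*} {m : ℕ}

theorem hammingDist_productWreath [DecidableEq Δ] {H : Subgroup (Perm Δ)}
    {f : Perm (Fin m → Δ)} (hf : f ∈ productWreath H m) (u v : Fin m → Δ) :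
    hammingDist (f u) (f v) = hammingDist u v := by
  obtain ⟨σ, g, -, hfg⟩ := hf
  have hcoord : ∀ w, f w ∘ σ = fun i => g (σ i) (w i) := fun w => by ext i; simp [hfg]
  rw [← hammingDist_comp_perm σ, hcoord, hcoord, hammingDist_comp _ fun i => (g (σ i)).injective]

theorem exists_hammingDist_eq [DecidableEq Δ] [Nontrivial Δ] {k : ℕ} (hk : k ≤ m) :
    ∃ u v : Fin m → Δ, hammingDist u v = k := by
  obtain ⟨a, b, hab⟩ := exists_pair_ne Δ
  refine ⟨fun _ => a, fun i => if (i : ℕ) < k then b else a, ?_⟩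
  simp [hammingDist, hab, Fin.card_filter_val_lt, hk]

theorem mem_productWreath_top_of_coord [Finite Δ] [Nonempty Δ] {f : Perm (Fin m → Δ)}
    (σ : Perm (Fin m)) (hf : ∀ i u v, u i = v i → f u (σ i) = f v (σ i)) :
    f ∈ productWreath ⊤ m := by
  classical
  obtain ⟨c⟩ := ‹Nonempty Δ›
  let g (j : Fin m) (x : Δ) : Δ := f (update (fun _ => c) j x) (σ j)
  have hg : ∀ v j, f v (σ j) = g j (v j) := fun v j => hf j _ _ (by simp)
  have hg_inj : ∀ j, Injective (g j) := by
    intro j x y hxy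
    have hfxy : f (update (fun _ => c) j x) = f (update (fun _ => c) j y) := by
      funext k
      obtain ⟨l, rfl⟩ := σ.surjective k
      rcases eq_or_ne l j with rfl | hlj
      · exact hxy
      · exact hf l _ _ (by simp [hlj])
    simpa using congrFun (f.injective hfxy) j
  refine ⟨σ, fun i => ofBijective (g (σ⁻¹ i)) (Finite.injective_iff_bijective.mp (hg_inj _)),
    fun _ => Subgroup.mem_top _, fun v i => ?_⟩
  simpa using hg v (σ⁻¹ i)

end ProductAction

section Orbits

variable {Δ : Type*} [DecidableEq Δ] {m : ℕ} {H : Subgroup (Perm Δ)}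
  {G : Subgroup (Perm (Fin m → Δ))}

noncomputable def orbitHammingDist (hG : G ≤ productWreath H m) :
    orbitRel.Quotient G ((Fin m → Δ) × (Fin m → Δ)) → Fin (m + 1) :=
  Quotient.lift
    (fun p => ⟨hammingDist p.1 p.2,
      Nat.lt_succ_of_le (hammingDist_le_card_fintype.trans_eq (Fintype.card_fin m))⟩)
    (by rintro p _ ⟨g, rfl⟩; exact Fin.ext (hammingDist_productWreath (hG g.2) _ _))

theorem orbitHammingDist_surjective [Nontrivial Δ] (hG : G ≤ productWreath H m) :
    Surjective (orbitHammingDist hG) := by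
  intro k
  obtain ⟨u, v, huv⟩ := exists_hammingDist_eq (Δ := Δ) (Nat.lt_succ_iff.mp k.2)
  exact ⟨Quotient.mk'' (u, v), Fin.ext huv⟩

theorem add_one_le_permRank [Finite Δ] [Nontrivial Δ] (hG : G ≤ productWreath H m) :
    m + 1 ≤ permRank G := by
  simpa [permRank] using Nat.card_le_card_of_surjective _ (orbitHammingDist_surjective hG)

theorem mem_orbit_iff_hammingDist_eq [Finite Δ] [Nontrivial Δ] (hG : G ≤ productWreath H m)
    (hrank : permRank G = m + 1) (p q : (Fin m → Δ) × (Fin m → Δ)) :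
    p ∈ orbit G q ↔ hammingDist p.1 p.2 = hammingDist q.1 q.2 := by
  have hinj := ((orbitHammingDist_surjective hG).bijective_of_nat_card_le
    (by simpa [permRank] using hrank.le)).injective
  rw [← orbitRel_apply, ← Quotient.eq'', ← hinj.eq_iff, ← Fin.val_inj]
  rfl

theorem mem_twoClosure_iff_hammingDist [Finite Δ] [Nontrivial Δ] (hG : G ≤ productWreath H m)
    (hrank : permRank G = m + 1) {f : Perm (Fin m → Δ)} :
    f ∈ twoClosure G ↔ ∀ u v, hammingDist (f u) (f v) = hammingDist u v :=
  ⟨fun hf u v => (mem_orbit_iff_hammingDist_eq hG hrank _ (u, v)).1 (hf (u, v)),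
    fun hf p => (mem_orbit_iff_hammingDist_eq hG hrank _ p).2 (hf p.1 p.2)⟩

end Orbits

section RookGraph

variable {Δ : Type*}

-- Meant for edges `uv` of the rook's graph: `f` keeps the direction of the edge.
def RespectsFirstCoord (f : Perm (Fin 2 → Δ)) (u v : Fin 2 → Δ) : Prop :=
  u 0 = v 0 ↔ f u 0 = f v 0

theorem respectsFirstCoord_comm {f : Perm (Fin 2 → Δ)} {u v : Fin 2 → Δ} :
    RespectsFirstCoord f u v ↔ RespectsFirstCoord f v u := by
  simp only [RespectsFirstCoord, eq_comm]

variable [DecidableEq Δ]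

theorem hammingDist_fin_two (u v : Fin 2 → Δ) :
    hammingDist u v = (if u 0 = v 0 then 0 else 1) + (if u 1 = v 1 then 0 else 1) := by
  simp [hammingDist, Finset.card_filter, Fin.sum_univ_two, ite_not]

variable {f : Perm (Fin 2 → Δ)}

-- If `v` and `w` lie on different lines through `u`, then `f v` and `f w` are at distance two,
-- so they cannot lie on one line through `f u`; if on the same line, `f v` and `f w` are adjacent.
theorem respectsFirstCoord_iff_of_adj (hf : ∀ u v, hammingDist (f u) (f v) = hammingDist u v)
    {u v w : Fin 2 → Δ} (hv : hammingDist u v = 1) (hw : hammingDist u w = 1) :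
    RespectsFirstCoord f u v ↔ RespectsFirstCoord f u w := by
  have := hf u v
  have := hf u w
  have := hf v w
  simp only [hammingDist_fin_two, RespectsFirstCoord] at *
  grind

theorem respectsFirstCoord_iff_of_adj_of_adj
    (hf : ∀ u v, hammingDist (f u) (f v) = hammingDist u v) {x y x' y' : Fin 2 → Δ}
    (hxy : hammingDist x y = 1) (hx'y' : hammingDist x' y' = 1) :
    RespectsFirstCoord f x y ↔ RespectsFirstCoord f x' y' := by
  have across : ∀ {x y x' y' : Fin 2 → Δ}, hammingDist x y = 1 → hammingDist x' y' = 1 →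
      hammingDist x x' = 1 → (RespectsFirstCoord f x y ↔ RespectsFirstCoord f x' y') :=
    fun hxy hx'y' hxx' => (respectsFirstCoord_iff_of_adj hf hxy hxx').trans <|
      respectsFirstCoord_comm.trans <|
        respectsFirstCoord_iff_of_adj hf (by rwa [hammingDist_comm]) hx'y'
  by_cases h0 : x 0 = x' 0 <;> by_cases h1 : x 1 = x' 1
  · obtain rfl : x = x' := by ext i; fin_cases i <;> assumption
    exact respectsFirstCoord_iff_of_adj hf hxy hx'y'
  · exact across hxy hx'y' (by simp [hammingDist_fin_two, h0, h1])
  · exact across hxy hx'y' (by simp [hammingDist_fin_two, h0, h1])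
  · -- `x` and `x'` are at distance two, with the common neighbour `![x 0, x' 1]`
    have hz : hammingDist (![x 0, x' 1] : Fin 2 → Δ) x' = 1 := by simp [hammingDist_fin_two, h0]
    exact (across hxy hz (by simp [hammingDist_fin_two, h1])).trans (across hz hx'y' hz)

theorem apply_eq_of_respectsFirstCoord {u v : Fin 2 → Δ} (huv : hammingDist u v = 1)
    (hfuv : hammingDist (f u) (f v) = 1) (hR : RespectsFirstCoord f u v) {i : Fin 2}
    (hi : u i = v i) : f u i = f v i := by
  rw [hammingDist_fin_two] at huv hfuv
  unfold RespectsFirstCoord at hR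
  fin_cases i <;> simp only [Fin.zero_eta, Fin.mk_one] at hi ⊢ <;> grind

theorem apply_swap_eq_of_not_respectsFirstCoord {u v : Fin 2 → Δ} (huv : hammingDist u v = 1)
    (hfuv : hammingDist (f u) (f v) = 1) (hR : ¬RespectsFirstCoord f u v) {i : Fin 2}
    (hi : u i = v i) : f u (swap 0 1 i) = f v (swap 0 1 i) := by
  rw [hammingDist_fin_two] at huv hfuv
  unfold RespectsFirstCoord at hR
  fin_cases i <;>
    simp only [Fin.zero_eta, Fin.mk_one, swap_apply_left, swap_apply_right] at hi ⊢ <;> grind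

theorem exists_perm_coord_of_hammingDist
    (hf : ∀ u v, hammingDist (f u) (f v) = hammingDist u v) :
    ∃ σ : Perm (Fin 2), ∀ i u v, u i = v i → f u (σ i) = f v (σ i) := by
  have hadj : ∀ i (u v : Fin 2 → Δ), u i = v i → u ≠ v → hammingDist u v = 1 := by
    intro i u v hi huv
    have := hammingDist_ne_zero.mpr huv
    rw [hammingDist_fin_two] at *
    fin_cases i <;> simp only [Fin.zero_eta, Fin.mk_one] at hi <;> grind
  by_cases hR : ∀ x y, hammingDist x y = 1 → RespectsFirstCoord f x y
  · refine ⟨1, fun i u v hi => ?_⟩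
    rcases eq_or_ne u v with rfl | huv
    · rfl
    have huv := hadj i u v hi huv
    exact apply_eq_of_respectsFirstCoord huv ((hf u v).trans huv) (hR u v huv) hi
  · push Not at hR
    obtain ⟨x, y, hxy, hxy'⟩ := hR
    refine ⟨swap 0 1, fun i u v hi => ?_⟩
    rcases eq_or_ne u v with rfl | huv
    · rfl
    have huv := hadj i u v hi huv
    exact apply_swap_eq_of_not_respectsFirstCoord huv ((hf u v).trans huv)
      ((respectsFirstCoord_iff_of_adj_of_adj hf hxy huv).not.1 hxy') hi

theorem mem_productWreath_of_hammingDist [Finite Δ] [Nonempty Δ]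
    (hf : ∀ u v, hammingDist (f u) (f v) = hammingDist u v) : f ∈ productWreath ⊤ 2 :=
  let ⟨σ, hσ⟩ := exists_perm_coord_of_hammingDist hf
  mem_productWreath_top_of_coord σ hσ

end RookGraph

theorem twoClosure_of_product_decomposition_general {Δ : Type*} [Fintype Δ]
    (hΔ : 2 ≤ Fintype.card Δ) (m : ℕ) (hm : 2 ≤ m)
    (G : Subgroup (Equiv.Perm (Fin m → Δ)))
    (hGW : G ≤ productWreath (⊤ : Subgroup (Equiv.Perm Δ)) m)
    (hrank : permRank G = 3) :
    m = 2 ∧ twoClosure G = productWreath (⊤ : Subgroup (Equiv.Perm Δ)) m := by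
  classical
  have : Nontrivial Δ := Fintype.one_lt_card_iff_nontrivial.mp hΔ
  obtain rfl : m = 2 := by
    have := add_one_le_permRank hGW
    omega
  refine ⟨rfl, le_antisymm (fun f hf => ?_) (fun f hf => ?_)⟩
  · exact mem_productWreath_of_hammingDist ((mem_twoClosure_iff_hammingDist hGW hrank).1 hf)
  · exact (mem_twoClosure_iff_hammingDist hGW hrank).2 (hammingDist_productWreath hf)

/-- If `G` is a primitive rank 3 group on `Δ^m` (`|Δ| ≥ 2`,
`m ≥ 2`) contained in `Sym(Δ) ↑ Sym(m)`, then `m = 2` and the 2-closure of `G`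
is `Sym(Δ) ↑ Sym(2)`. -/
theorem twoClosure_of_product_decomposition {Δ : Type*} [Fintype Δ]
    (hΔ : 2 ≤ Fintype.card Δ) (m : ℕ) (hm : 2 ≤ m)
    (G : Subgroup (Equiv.Perm (Fin m → Δ)))
    (hGW : G ≤ productWreath (⊤ : Subgroup (Equiv.Perm Δ)) m)
    (hprim : IsPrimitivePerm G) (hrank : permRank G = 3) :
    m = 2 ∧ twoClosure G = productWreath (⊤ : Subgroup (Equiv.Perm Δ)) m :=
  twoClosure_of_product_decomposition_general hΔ m hm G hGW hrank
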